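/- arXiv:0710.2604 — 9 statements merged into one kernel-verified Lean document; each statement's English description precedes it below -/
import Mathlib

section
/- (Property 1) Assume each D_i is nonempty and each R_i and R'_i is a strict partial order on D_i. Then the dominance relation induced by R = (R_1,…,R_m) is contained in the dominance relation induced by R' = (R'_1,…,R'_m) — i.e., for all points p, q, if p dominates q with respect to R then p dominates q with respect to R' — if and only if R_i ⊆ R'_i for every dimension i. -/
/-- A point `p` dominates a point `q` with respect to the preference `R`:
`p.D_i ⪯_i q.D_i` for every dimension `i` and `p.D_i ≺_i q.D_i` for some dimension. -/
def dominates {m : ℕ} {D : Fin m → Type*} (R : ∀ i, D i → D i → Prop)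
    (p q : ∀ i, D i) : Prop :=
  (∀ i, p i = q i ∨ R i (p i) (q i)) ∧ ∃ i, R i (p i) (q i)

/-- The skyline of the dataset `𝒟` with respect to the preference `R`:
the points of `𝒟` dominated by no point of `𝒟`. -/
def skyline {m : ℕ} {D : Fin m → Type*} (𝒟 : Set (∀ i, D i))
    (R : ∀ i, D i → D i → Prop) : Set (∀ i, D i) :=
  {p ∈ 𝒟 | ∀ q ∈ 𝒟, ¬ dominates R q p}

/-- The `x`-th order implicit preference `v 0 ≺ v 1 ≺ ... ≺ v (x-1) ≺ *`:
`u P w` iff `u = v a` for some `a` and `w ∉ {v 0, …, v a}`. -/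
def implicitPref {D : Type*} {x : ℕ} (v : Fin x → D) : D → D → Prop :=
  fun u w => ∃ a : Fin x, u = v a ∧ ∀ b : Fin x, b ≤ a → w ≠ v b

/-- Property 1: with nonempty domains and strict partial order components,
dominance w.r.t. `R` is contained in dominance w.r.t. `R'` iff `R i ⊆ R' i` for all `i`. -/
theorem dominance_containment_iff {m : ℕ} (hm : 1 ≤ m) {D : Fin m → Type*}
    (hne : ∀ i, Nonempty (D i))
    (R R' : ∀ i, D i → D i → Prop)
    (hirr : ∀ i, ∀ u : D i, ¬ R i u u)
    (htrans : ∀ i, ∀ u w z : D i, R i u w → R i w z → R i u z)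
    (hirr' : ∀ i, ∀ u : D i, ¬ R' i u u)
    (htrans' : ∀ i, ∀ u w z : D i, R' i u w → R' i w z → R' i u z) :
    (∀ p q : ∀ i, D i, dominates R p q → dominates R' p q) ↔
      (∀ i, ∀ u w : D i, R i u w → R' i u w) := by
  constructor
  · intro h i u w huw
    classical
    have c : ∀ j, D j := fun j => Classical.arbitrary (D j)
    set p := Function.update c i u with hp
    set q := Function.update c i w with hq
    have hpi : p i = u := Function.update_self i u c
    have hqi : q i = w := Function.update_self i w c
    have hdom : dominates R p q := by
      refine ⟨fun j => ?_, ⟨i, by rw [hpi, hqi]; exact huw⟩⟩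
      by_cases hj : j = i
      · subst hj; right; rw [hpi, hqi]; exact huw
      · left; rw [hp, hq, Function.update_of_ne hj, Function.update_of_ne hj]
    have hdom' := h p q hdom
    rcases hdom'.1 i with heq | hr
    · exfalso
      rw [hpi, hqi] at heq
      exact hirr i u (heq ▸ huw)
    · rw [hpi, hqi] at hr; exact hr
  · rintro h p q ⟨hall, i, hi⟩
    exact ⟨fun j => (hall j).imp id (h j _ _), i, h i _ _ hi⟩
end

section
/- (Merging Property, Theorem 2) Under the merging setup, the skyline with respect to R̃''' satisfies SKY_𝒟(R̃''') = (SKY_𝒟(R̃') ∩ SKY_𝒟(R̃'')) ∪ PSKY(R̃'). -/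
/-- Merging Property, Theorem 2:
`SKY(R''') = (SKY(R') ∩ SKY(R'')) ∪ PSKY(R')`, where the values of dimension `i` are
`v 0, …, v k` (so `x = k + 1 ≥ 2`), `R' i` is `v 0 ≺ … ≺ v (k-1) ≺ *`,
`R'' i` is `v k ≺ *`, and `R''' i` is `v 0 ≺ … ≺ v k ≺ *`. -/
theorem merging_property {m : ℕ} (hm : 1 ≤ m) {D : Fin m → Type*}
    (𝒟 : Set (∀ j, D j)) (i : Fin m)
    (k : ℕ) (hk : 1 ≤ k) (v : Fin (k + 1) → D i) (hv : Function.Injective v)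
    (R' R'' R''' : ∀ j, D j → D j → Prop)
    (hpo' : ∀ j, (∀ u : D j, ¬ R' j u u) ∧
      (∀ u w z : D j, R' j u w → R' j w z → R' j u z))
    (hpo'' : ∀ j, (∀ u : D j, ¬ R'' j u u) ∧
      (∀ u w z : D j, R'' j u w → R'' j w z → R'' j u z))
    (hpo''' : ∀ j, (∀ u : D j, ¬ R''' j u u) ∧
      (∀ u w z : D j, R''' j u w → R''' j w z → R''' j u z))
    (hagree : ∀ j, j ≠ i → R' j = R'' j ∧ R' j = R''' j)
    (hi' : R' i = implicitPref (fun a : Fin k => v a.castSucc))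
    (hi'' : R'' i = implicitPref (fun _ : Fin 1 => v (Fin.last k)))
    (hi''' : R''' i = implicitPref v) :
    skyline 𝒟 R''' =
      (skyline 𝒟 R' ∩ skyline 𝒟 R'') ∪
        {p ∈ skyline 𝒟 R' | ∃ a : Fin k, p i = v a.castSucc} := by
  -- R' i implies R''' i
  have hsubi : ∀ u w, R' i u w → R''' i u w := by
    intro u w h
    rw [hi'] at h; rw [hi''']
    obtain ⟨a, ha, hb⟩ := h
    refine ⟨a.castSucc, ha, ?_⟩
    intro b hb'
    have hbk : b.val < k := lt_of_le_of_lt hb' a.isLt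
    have := hb ⟨b.val, hbk⟩ (by simpa [Fin.le_def] using hb')
    have hbe : b = Fin.castSucc ⟨b.val, hbk⟩ := Fin.ext rfl
    rw [hbe]; exact this
  have hsub : ∀ j u w, R' j u w → R''' j u w := by
    intro j u w h
    by_cases hj : j = i
    · subst hj; exact hsubi u w h
    · rw [← (hagree j hj).2]; exact h
  have domsub : ∀ q p, dominates R' q p → dominates R''' q p := by
    rintro q p ⟨hall, j, hj⟩
    exact ⟨fun j' => (hall j').imp id (hsub j' _ _), j, hsub j _ _ hj⟩
  -- R''' i at a point whose i-value is some v a.castSucc implies R' i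
  have hkey' : ∀ u (w : D i), (∃ a : Fin k, w = v a.castSucc) → R''' i u w → R' i u w := by
    rintro u w ⟨a, rfl⟩ h
    rw [hi'''] at h; rw [hi']
    obtain ⟨c, hc, hb⟩ := h
    have hca : c < a.castSucc := by
      by_contra hle
      exact hb a.castSucc (le_of_not_gt hle) rfl
    have hck : c.val < k := lt_of_lt_of_le hca (by simp [Fin.le_def, Nat.lt_succ_iff])
    refine ⟨⟨c.val, hck⟩, by rw [hc]; exact congrArg v (Fin.ext rfl), ?_⟩
    intro b hb'
    exact hb b.castSucc (by simpa [Fin.le_def] using hb')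
  -- R'' i at a point whose i-value is NOT among v 0 .. v (k-1) implies R''' i
  have hkey'' : ∀ u (w : D i), (∀ a : Fin k, w ≠ v a.castSucc) → R'' i u w → R''' i u w := by
    intro u w hw h
    rw [hi''] at h; rw [hi''']
    obtain ⟨a, ha, hb⟩ := h
    have hwlast : w ≠ v (Fin.last k) := hb a le_rfl
    refine ⟨Fin.last k, ha, ?_⟩
    intro b _
    by_cases hbk : b.val < k
    · have := hw ⟨b.val, hbk⟩
      rwa [show Fin.castSucc ⟨b.val, hbk⟩ = b from Fin.ext rfl] at this
    · rwa [show b = Fin.last k from Fin.ext (by omega)]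
  ext p
  simp only [Set.mem_union, Set.mem_inter_iff, Set.mem_setOf_eq, skyline, Set.mem_sep_iff]
  constructor
  · rintro ⟨hpD, hnd⟩
    have hsky' : p ∈ 𝒟 ∧ ∀ q ∈ 𝒟, ¬ dominates R' q p :=
      ⟨hpD, fun q hq hd => hnd q hq (domsub q p hd)⟩
    by_cases hcase : ∃ a : Fin k, p i = v a.castSucc
    · exact Or.inr ⟨hsky', hcase⟩
    · push_neg at hcase
      refine Or.inl ⟨hsky', hpD, fun q hq hd => hnd q hq ?_⟩
      obtain ⟨hall, j, hj⟩ := hd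
      refine ⟨fun j' => ?_, ?_⟩
      · rcases hall j' with h | h
        · exact Or.inl h
        · by_cases hj' : j' = i
          · subst hj'; exact Or.inr (hkey'' _ _ hcase h)
          · right; rw [← (hagree j' hj').2, (hagree j' hj').1]; exact h
      · refine ⟨j, ?_⟩
        by_cases hj' : j = i
        · subst hj'; exact hkey'' _ _ hcase hj
        · rw [← (hagree j hj').2, (hagree j hj').1]; exact hj
  · rintro (⟨⟨hpD, hnd'⟩, _, hnd''⟩ | ⟨⟨hpD, hnd'⟩, hcase⟩)
    · refine ⟨hpD, fun q hq hd => ?_⟩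
      obtain ⟨hall, j, hj⟩ := hd
      rcases hall i with hqi | hqi
      · -- q i = p i : strict dimension must differ from i, so dominates wrt R'
        have hji : j ≠ i := by
          rintro rfl
          rw [hqi] at hj
          exact (hpo''' j).1 _ hj
        refine hnd' q hq ⟨fun j' => ?_, j, by rw [(hagree j hji).2]; exact hj⟩
        rcases hall j' with h | h
        · exact Or.inl h
        · by_cases hj' : j' = i
          · subst hj'; exact Or.inl hqi
          · right; rw [(hagree j' hj').2]; exact h
      · -- R''' i (q i) (p i)
        rw [hi'''] at hqi
        obtain ⟨c, hc, hb⟩ := hqi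
        by_cases hck : c.val < k
        · -- dominates wrt R'
          have hRi : R' i (q i) (p i) := by
            rw [hi']
            refine ⟨⟨c.val, hck⟩, by rw [hc]; exact congrArg v (Fin.ext rfl), ?_⟩
            intro b hb'
            exact hb b.castSucc (by simpa [Fin.le_def] using hb')
          refine hnd' q hq ⟨fun j' => ?_, i, hRi⟩
          rcases hall j' with h | h
          · exact Or.inl h
          · by_cases hj' : j' = i
            · subst hj'; exact Or.inr hRi
            · right; rw [(hagree j' hj').2]; exact h
        · -- c = last : dominates wrt R''
          have hcl : c = Fin.last k := Fin.ext (by have := c.isLt; simp [Fin.last]; omega)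
          have hRi : R'' i (q i) (p i) := by
            rw [hi'']
            exact ⟨0, by rw [hc, hcl], fun b _ => by rw [← hcl]; exact hb c le_rfl⟩
          refine hnd'' q hq ⟨fun j' => ?_, i, hRi⟩
          rcases hall j' with h | h
          · exact Or.inl h
          · by_cases hj' : j' = i
            · subst hj'; exact Or.inr hRi
            · right; rw [← (hagree j' hj').1, (hagree j' hj').2]; exact h
    · refine ⟨hpD, fun q hq hd => ?_⟩
      obtain ⟨hall, j, hj⟩ := hd
      rcases hall i with hqi | hqi
      · have hji : j ≠ i := by
          rintro rfl
          rw [hqi] at hj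
          exact (hpo''' j).1 _ hj
        refine hnd' q hq ⟨fun j' => ?_, j, by rw [(hagree j hji).2]; exact hj⟩
        rcases hall j' with h | h
        · exact Or.inl h
        · by_cases hj' : j' = i
          · subst hj'; exact Or.inl hqi
          · right; rw [(hagree j' hj').2]; exact h
      · have hRi : R' i (q i) (p i) := hkey' _ _ hcase hqi
        refine hnd' q hq ⟨fun j' => ?_, i, hRi⟩
        rcases hall j' with h | h
        · exact Or.inl h
        · by_cases hj' : j' = i
          · subst hj'; exact Or.inr hRi
          · right; rw [(hagree j' hj').2]; exact h
end

section
/- (Merging Property, forward inclusion) Under the merging setup, SKY_𝒟(R̃''') ⊆ (SKY_𝒟(R̃') ∩ SKY_𝒟(R̃'')) ∪ PSKY(R̃'). -/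
/-!
Weakening the preference can only enlarge the skyline, so it suffices to compare the relations
at the dimension `i`. Every pair ordered by `v_1 ≺ … ≺ v_{x-1} ≺ *` is ordered by
`v_1 ≺ … ≺ v_x ≺ *`, hence `SKY(R̃''') ⊆ SKY(R̃')`. A pair `(u, w)` ordered by `v_x ≺ *` is
ordered by `v_1 ≺ … ≺ v_x ≺ *` as soon as `w ∉ {v_1, …, v_{x-1}}`; so a point of `SKY(R̃''')`
whose `i`-th value lies outside `{v_1, …, v_{x-1}}` is also in `SKY(R̃'')`.
-/

section Skyline

variable {m : ℕ} {D : Fin m → Type*}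

theorem dominates.mono {R S : ∀ j, D j → D j → Prop} {p q : ∀ j, D j}
    (h : ∀ j, R j (q j) (p j) → S j (q j) (p j)) (hd : dominates R q p) :
    dominates S q p :=
  ⟨fun j => (hd.1 j).imp id (h j), hd.2.imp h⟩

theorem mem_skyline_of_forall_imp {𝒟 : Set (∀ j, D j)} {R S : ∀ j, D j → D j → Prop}
    {p : ∀ j, D j} (hp : p ∈ skyline 𝒟 S) (h : ∀ j u, R j u (p j) → S j u (p j)) :
    p ∈ skyline 𝒟 R :=
  ⟨hp.1, fun q hq hd => hp.2 q hq (hd.mono fun j => h j (q j))⟩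

theorem forall_imp_of_eq_of_ne {R S : ∀ j, D j → D j → Prop} {i : Fin m} {p : ∀ j, D j}
    (hagree : ∀ j, j ≠ i → R j = S j) (hi : ∀ u, R i u (p i) → S i u (p i)) :
    ∀ j u, R j u (p j) → S j u (p j) := by
  intro j u
  by_cases hj : j = i
  · subst hj
    exact hi u
  · rw [hagree j hj]
    exact id

end Skyline

section ImplicitPref

variable {α : Type*} {k : ℕ} (v : Fin (k + 1) → α) {u w : α}

theorem implicitPref_of_implicitPref_castSucc
    (h : implicitPref (fun a : Fin k => v a.castSucc) u w) : implicitPref v u w := by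
  obtain ⟨a, rfl, hw⟩ := h
  refine ⟨a.castSucc, rfl, fun b hb => ?_⟩
  obtain ⟨c, rfl⟩ := Fin.exists_castSucc_eq.mpr (hb.trans_lt a.castSucc_lt_last).ne
  exact hw c (Fin.castSucc_le_castSucc_iff.mp hb)

theorem implicitPref_of_implicitPref_last (hw : ∀ a : Fin k, w ≠ v a.castSucc)
    (h : implicitPref (fun _ : Fin 1 => v (Fin.last k)) u w) : implicitPref v u w := by
  obtain ⟨a, rfl, hlast⟩ := h
  refine ⟨Fin.last k, rfl, fun b _ => ?_⟩
  rcases Fin.eq_castSucc_or_eq_last b with ⟨c, rfl⟩ | rfl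
  · exact hw c
  · exact hlast a le_rfl

end ImplicitPref

theorem merging_property_forward_general {m : ℕ} {D : Fin m → Type*}
    (𝒟 : Set (∀ j, D j)) (i : Fin m)
    (k : ℕ) (v : Fin (k + 1) → D i)
    (R' R'' R''' : ∀ j, D j → D j → Prop)
    (hagree : ∀ j, j ≠ i → R' j = R'' j ∧ R' j = R''' j)
    (hi' : R' i = implicitPref (fun a : Fin k => v a.castSucc))
    (hi'' : R'' i = implicitPref (fun _ : Fin 1 => v (Fin.last k)))
    (hi''' : R''' i = implicitPref v) :
    skyline 𝒟 R''' ⊆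
      (skyline 𝒟 R' ∩ skyline 𝒟 R'') ∪
        {p ∈ skyline 𝒟 R' | ∃ a : Fin k, p i = v a.castSucc} := by
  intro p hp
  have hp' : p ∈ skyline 𝒟 R' :=
    mem_skyline_of_forall_imp hp <| forall_imp_of_eq_of_ne (fun j hj => (hagree j hj).2)
      fun u => by
        rw [hi', hi''']
        exact implicitPref_of_implicitPref_castSucc v
  by_cases hprefix : ∃ a : Fin k, p i = v a.castSucc
  · exact Or.inr ⟨hp', hprefix⟩
  refine Or.inl ⟨hp', mem_skyline_of_forall_imp hp <| forall_imp_of_eq_of_ne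
    (fun j hj => (hagree j hj).1.symm.trans (hagree j hj).2) fun u => ?_⟩
  rw [hi'', hi''']
  exact implicitPref_of_implicitPref_last v (not_exists.mp hprefix)

/-- Merging Property, forward inclusion. -/
theorem merging_property_forward {m : ℕ} (hm : 1 ≤ m) {D : Fin m → Type*}
    (𝒟 : Set (∀ j, D j)) (i : Fin m)
    (k : ℕ) (hk : 1 ≤ k) (v : Fin (k + 1) → D i) (hv : Function.Injective v)
    (R' R'' R''' : ∀ j, D j → D j → Prop)
    (hpo' : ∀ j, (∀ u : D j, ¬ R' j u u) ∧
      (∀ u w z : D j, R' j u w → R' j w z → R' j u z))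
    (hpo'' : ∀ j, (∀ u : D j, ¬ R'' j u u) ∧
      (∀ u w z : D j, R'' j u w → R'' j w z → R'' j u z))
    (hpo''' : ∀ j, (∀ u : D j, ¬ R''' j u u) ∧
      (∀ u w z : D j, R''' j u w → R''' j w z → R''' j u z))
    (hagree : ∀ j, j ≠ i → R' j = R'' j ∧ R' j = R''' j)
    (hi' : R' i = implicitPref (fun a : Fin k => v a.castSucc))
    (hi'' : R'' i = implicitPref (fun _ : Fin 1 => v (Fin.last k)))
    (hi''' : R''' i = implicitPref v) :
    skyline 𝒟 R''' ⊆
      (skyline 𝒟 R' ∩ skyline 𝒟 R'') ∪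
        {p ∈ skyline 𝒟 R' | ∃ a : Fin k, p i = v a.castSucc} :=
  merging_property_forward_general 𝒟 i k v R' R'' R''' hagree hi' hi'' hi'''
end

section
/- (Merging Property, reverse inclusion) Under the merging setup, (SKY_𝒟(R̃') ∩ SKY_𝒟(R̃'')) ∪ PSKY(R̃') ⊆ SKY_𝒟(R̃'''). -/
lemma implicitPref_split {D : Type*} {k : ℕ} (v : Fin (k + 1) → D) {u w : D}
    (h : implicitPref v u w) :
    implicitPref (fun a : Fin k => v a.castSucc) u w ∨
      implicitPref (fun _ : Fin 1 => v (Fin.last k)) u w := by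
  obtain ⟨a, rfl, hb⟩ := h
  by_cases ha : a = Fin.last k
  · subst ha
    exact Or.inr ⟨0, rfl, fun b _ => hb (Fin.last k) le_rfl⟩
  · obtain ⟨a', rfl⟩ := Fin.exists_castSucc_eq.mpr ha
    exact Or.inl ⟨a', rfl, fun b hba =>
      hb b.castSucc (Fin.castSucc_le_castSucc_iff.mpr hba)⟩

lemma implicitPref_of_mem {D : Type*} {k : ℕ} {v : Fin (k + 1) → D} {u w : D}
    (h : implicitPref v u w) {a' : Fin k} (hw : w = v a'.castSucc) :
    implicitPref (fun a : Fin k => v a.castSucc) u w := by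
  obtain ⟨a, rfl, hb⟩ := h
  have hlt : a < a'.castSucc := by
    by_contra hle
    exact hb a'.castSucc (le_of_not_gt hle) hw
  have hne : a ≠ Fin.last k := ne_of_lt (lt_of_lt_of_le hlt (Fin.le_last _))
  obtain ⟨a'', rfl⟩ := Fin.exists_castSucc_eq.mpr hne
  exact ⟨a'', rfl, fun b hba =>
    hb b.castSucc (Fin.castSucc_le_castSucc_iff.mpr hba)⟩

/-- Merging Property, reverse inclusion. -/
theorem merging_property_reverse {m : ℕ} (hm : 1 ≤ m) {D : Fin m → Type*}
    (𝒟 : Set (∀ j, D j)) (i : Fin m)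
    (k : ℕ) (hk : 1 ≤ k) (v : Fin (k + 1) → D i) (hv : Function.Injective v)
    (R' R'' R''' : ∀ j, D j → D j → Prop)
    (hpo' : ∀ j, (∀ u : D j, ¬ R' j u u) ∧
      (∀ u w z : D j, R' j u w → R' j w z → R' j u z))
    (hpo'' : ∀ j, (∀ u : D j, ¬ R'' j u u) ∧
      (∀ u w z : D j, R'' j u w → R'' j w z → R'' j u z))
    (hpo''' : ∀ j, (∀ u : D j, ¬ R''' j u u) ∧
      (∀ u w z : D j, R''' j u w → R''' j w z → R''' j u z))
    (hagree : ∀ j, j ≠ i → R' j = R'' j ∧ R' j = R''' j)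
    (hi' : R' i = implicitPref (fun a : Fin k => v a.castSucc))
    (hi'' : R'' i = implicitPref (fun _ : Fin 1 => v (Fin.last k)))
    (hi''' : R''' i = implicitPref v) :
    (skyline 𝒟 R' ∩ skyline 𝒟 R'') ∪
        {p ∈ skyline 𝒟 R' | ∃ a : Fin k, p i = v a.castSucc} ⊆
      skyline 𝒟 R''' := by
  have hR'e : ∀ j, j ≠ i → R''' j = R' j := fun j hj => ((hagree j hj).2).symm
  have hR''e : ∀ j, j ≠ i → R''' j = R'' j := fun j hj =>
    ((hagree j hj).2).symm.trans (hagree j hj).1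
  rintro p (⟨⟨hp𝒟, hp'⟩, ⟨-, hp''⟩⟩ | ⟨⟨hp𝒟, hp'⟩, a', ha'⟩) <;>
    refine ⟨hp𝒟, fun q hq hdom => ?_⟩ <;>
    obtain ⟨hweak, j, hstr⟩ := hdom
  · -- p ∈ SKY(R') ∩ SKY(R'')
    by_cases hqi : q i = p i
    · have hji : j ≠ i := by
        rintro rfl
        rw [hqi] at hstr
        exact (hpo''' j).1 _ hstr
      refine hp' q hq ⟨fun l => ?_, j, by rw [← hR'e j hji]; exact hstr⟩
      by_cases hl : l = i
      · subst hl; exact Or.inl hqi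
      · rcases hweak l with h | h
        · exact Or.inl h
        · exact Or.inr (by rw [← hR'e l hl]; exact h)
    · have hri : R''' i (q i) (p i) := (hweak i).resolve_left hqi
      rw [hi'''] at hri
      rcases implicitPref_split v hri with hP | hP
      · refine hp' q hq ⟨fun l => ?_, i, by rw [hi']; exact hP⟩
        by_cases hl : l = i
        · subst hl; exact Or.inr (by rw [hi']; exact hP)
        · rcases hweak l with h | h
          · exact Or.inl h
          · exact Or.inr (by rw [← hR'e l hl]; exact h)
      · refine hp'' q hq ⟨fun l => ?_, i, by rw [hi'']; exact hP⟩
        by_cases hl : l = i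
        · subst hl; exact Or.inr (by rw [hi'']; exact hP)
        · rcases hweak l with h | h
          · exact Or.inl h
          · exact Or.inr (by rw [← hR''e l hl]; exact h)
  · -- p ∈ PSKY(R')
    by_cases hqi : q i = p i
    · have hji : j ≠ i := by
        rintro rfl
        rw [hqi] at hstr
        exact (hpo''' j).1 _ hstr
      refine hp' q hq ⟨fun l => ?_, j, by rw [← hR'e j hji]; exact hstr⟩
      by_cases hl : l = i
      · subst hl; exact Or.inl hqi
      · rcases hweak l with h | h
        · exact Or.inl h
        · exact Or.inr (by rw [← hR'e l hl]; exact h)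
    · have hri : R''' i (q i) (p i) := (hweak i).resolve_left hqi
      rw [hi'''] at hri
      have hP := implicitPref_of_mem hri ha'
      refine hp' q hq ⟨fun l => ?_, i, by rw [hi']; exact hP⟩
      by_cases hl : l = i
      · subst hl; exact Or.inr (by rw [hi']; exact hP)
      · rcases hweak l with h | h
        · exact Or.inl h
        · exact Or.inr (by rw [← hR'e l hl]; exact h)
end

section
/- (Disqualifying-set form of the Merging Property) Under the merging setup, let S be any set of points with SKY_𝒟(R̃') ⊆ S, SKY_𝒟(R̃'') ⊆ S and SKY_𝒟(R̃''') ⊆ S. Define A(X) = S \ SKY_𝒟(X) for a preference X, and let B = {p ∈ A(R̃'') : p.D_i ∈ {v_1,…,v_{x-1}}}. Then A(R̃''') = A(R̃') ∪ (A(R̃'') \ B). -/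
/-! In dimension `i`, `v₁ ≺ … ≺ vₓ ≺ *` ranks `u` strictly above `w` exactly when
`v₁ ≺ … ≺ vₓ₋₁ ≺ *` does, or `vₓ ≺ *` does and `w` is none of `v₁, …, vₓ₋₁`. As the three
preferences agree in every other dimension, a point is dominated under `R'''` iff it is dominated
under `R'`, or under `R''` while its `i`-th value lies outside `{v₁, …, vₓ₋₁}`. Hence
`p ∈ SKY(R''')` iff `p ∈ SKY(R')` and (`p ∈ SKY(R'')` or `p.Dᵢ ∈ {v₁, …, vₓ₋₁}`); complementing
inside `S` gives the identity of disqualifying sets. -/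

theorem implicitPref_irrefl {D : Type*} {x : ℕ} (v : Fin x → D) (u : D) :
    ¬ implicitPref v u u := by
  rintro ⟨a, rfl, h⟩
  exact h a le_rfl rfl

theorem implicitPref_iff_init_or_last {D : Type*} {k : ℕ} (v : Fin (k + 1) → D) (u w : D) :
    implicitPref v u w ↔
      implicitPref (fun a : Fin k => v a.castSucc) u w ∨
        (implicitPref (fun _ : Fin 1 => v (Fin.last k)) u w ∧
          w ∉ Set.range (fun a : Fin k => v a.castSucc)) := by
  constructor
  · rintro ⟨a, rfl, h⟩
    cases a using Fin.lastCases with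
    | last =>
      have hw : ∀ b, w ≠ v b := fun b => h b (Fin.le_last b)
      exact .inr ⟨⟨0, rfl, fun _ _ => hw _⟩, by rintro ⟨b, hb⟩; exact hw _ hb.symm⟩
    | cast c =>
      exact .inl ⟨c, rfl, fun b hb => h b.castSucc (Fin.castSucc_le_castSucc_iff.2 hb)⟩
  · rintro (⟨a, rfl, h⟩ | ⟨⟨a, hu, hlast⟩, hinit⟩)
    · refine ⟨a.castSucc, rfl, fun b hb => ?_⟩
      cases b using Fin.lastCases with
      | last => exact absurd hb (Fin.castSucc_lt_last a).not_ge
      | cast c => exact h c (Fin.castSucc_le_castSucc_iff.1 hb)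
    · refine ⟨Fin.last k, hu, fun b _ => ?_⟩
      cases b using Fin.lastCases with
      | last => exact hlast a le_rfl
      | cast c => exact fun hw => hinit ⟨c, hw.symm⟩

section Merging

variable {m : ℕ} {D : Fin m → Type*}

theorem dominates_of_agree_off {R S : ∀ j, D j → D j → Prop} {i : Fin m} {p q : ∀ j, D j}
    (hRS : ∀ j, j ≠ i → R j = S j) (hirr : ¬ R i (p i) (p i))
    (hi : q i = p i ∨ S i (q i) (p i)) (h : dominates R q p) : dominates S q p := by
  obtain ⟨hle, j, hj⟩ := h
  refine ⟨fun l => ?_, j, ?_⟩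
  · by_cases hl : l = i
    · exact hl ▸ hi
    · exact hRS l hl ▸ hle l
  · by_cases hji : j = i
    · subst hji
      exact hi.resolve_left fun heq => hirr (heq ▸ hj)
    · exact hRS j hji ▸ hj

variable {R' R'' R''' : ∀ j, D j → D j → Prop} {i : Fin m} {T : Set (D i)}

theorem dominates_iff_of_split (hagree : ∀ j, j ≠ i → R' j = R'' j ∧ R' j = R''' j)
    (hsplit : ∀ u w, R''' i u w ↔ R' i u w ∨ (R'' i u w ∧ w ∉ T))
    (hirr' : ∀ u, ¬ R' i u u) (hirr'' : ∀ u, ¬ R'' i u u) {p q : ∀ j, D j} :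
    dominates R''' q p ↔ dominates R' q p ∨ (dominates R'' q p ∧ p i ∉ T) := by
  have h₁₃ : ∀ j, j ≠ i → R' j = R''' j := fun j hj => (hagree j hj).2
  have h₂₃ : ∀ j, j ≠ i → R'' j = R''' j := fun j hj => (hagree j hj).1 ▸ (hagree j hj).2
  have hirr''' : ¬ R''' i (p i) (p i) := by simp [hsplit, hirr', hirr'']
  have h₃₁ : ∀ j, j ≠ i → R''' j = R' j := fun j hj => (h₁₃ j hj).symm
  have h₃₂ : ∀ j, j ≠ i → R''' j = R'' j := fun j hj => (h₂₃ j hj).symm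
  constructor
  · intro h
    rcases h.1 i with heq | hlt
    · exact .inl (dominates_of_agree_off h₃₁ hirr''' (.inl heq) h)
    rcases (hsplit _ _).1 hlt with h' | ⟨h'', hT⟩
    · exact .inl (dominates_of_agree_off h₃₁ hirr''' (.inr h') h)
    · exact .inr ⟨dominates_of_agree_off h₃₂ hirr''' (.inr h'') h, hT⟩
  · rintro (h | ⟨h, hT⟩)
    · exact dominates_of_agree_off h₁₃ (hirr' _)
        ((h.1 i).imp_right fun h' => (hsplit _ _).2 (.inl h')) h
    · exact dominates_of_agree_off h₂₃ (hirr'' _)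
        ((h.1 i).imp_right fun h'' => (hsplit _ _).2 (.inr ⟨h'', hT⟩)) h

theorem mem_skyline_iff_of_split (𝒟 : Set (∀ j, D j))
    (hagree : ∀ j, j ≠ i → R' j = R'' j ∧ R' j = R''' j)
    (hsplit : ∀ u w, R''' i u w ↔ R' i u w ∨ (R'' i u w ∧ w ∉ T))
    (hirr' : ∀ u, ¬ R' i u u) (hirr'' : ∀ u, ¬ R'' i u u) {p : ∀ j, D j} :
    p ∈ skyline 𝒟 R''' ↔ p ∈ skyline 𝒟 R' ∧ (p ∈ skyline 𝒟 R'' ∨ p i ∈ T) := by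
  have hdom q := dominates_iff_of_split (p := p) (q := q) hagree hsplit hirr' hirr''
  constructor
  · rintro ⟨hp, h⟩
    refine ⟨⟨hp, fun q hq hd => h q hq ((hdom q).2 (.inl hd))⟩, ?_⟩
    exact or_iff_not_imp_right.2 fun hT =>
      ⟨hp, fun q hq hd => h q hq ((hdom q).2 (.inr ⟨hd, hT⟩))⟩
  · rintro ⟨⟨hp, h'⟩, hor⟩
    refine ⟨hp, fun q hq hd => ?_⟩
    rcases (hdom q).1 hd with hd' | ⟨hd'', hT⟩
    · exact h' q hq hd'
    · exact hor.elim (fun h'' => h''.2 q hq hd'') hT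

end Merging

theorem merging_property_disqualifying_general {m : ℕ} {D : Fin m → Type*}
    (𝒟 : Set (∀ j, D j)) (i : Fin m)
    (k : ℕ) (v : Fin (k + 1) → D i)
    (R' R'' R''' : ∀ j, D j → D j → Prop)
    (hagree : ∀ j, j ≠ i → R' j = R'' j ∧ R' j = R''' j)
    (hi' : R' i = implicitPref (fun a : Fin k => v a.castSucc))
    (hi'' : R'' i = implicitPref (fun _ : Fin 1 => v (Fin.last k)))
    (hi''' : R''' i = implicitPref v)
    (S : Set (∀ j, D j)) :
    S \ skyline 𝒟 R''' =
      (S \ skyline 𝒟 R') ∪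
        ((S \ skyline 𝒟 R'')
          \ {p ∈ S \ skyline 𝒟 R'' | ∃ a : Fin k, p i = v a.castSucc}) := by
  have hsplit := implicitPref_iff_init_or_last v
  rw [← hi', ← hi'', ← hi'''] at hsplit
  ext p
  have hp := mem_skyline_iff_of_split 𝒟 hagree hsplit (hi' ▸ implicitPref_irrefl _)
    (hi'' ▸ implicitPref_irrefl _) (p := p)
  simp only [Set.mem_range, Set.mem_sdiff, Set.mem_union, Set.mem_ofPred_eq, eq_comm]
    at hp ⊢
  tauto

/-- Disqualifying-set form of the Merging Property:
with `A(X) = S \ SKY(X)` and `B = {p ∈ A(R'') : p.D_i ∈ {v 0, …, v (k-1)}}`,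
we have `A(R''') = A(R') ∪ (A(R'') \ B)`. -/
theorem merging_property_disqualifying {m : ℕ} (hm : 1 ≤ m) {D : Fin m → Type*}
    (𝒟 : Set (∀ j, D j)) (i : Fin m)
    (k : ℕ) (hk : 1 ≤ k) (v : Fin (k + 1) → D i) (hv : Function.Injective v)
    (R' R'' R''' : ∀ j, D j → D j → Prop)
    (hpo' : ∀ j, (∀ u : D j, ¬ R' j u u) ∧
      (∀ u w z : D j, R' j u w → R' j w z → R' j u z))
    (hpo'' : ∀ j, (∀ u : D j, ¬ R'' j u u) ∧
      (∀ u w z : D j, R'' j u w → R'' j w z → R'' j u z))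
    (hpo''' : ∀ j, (∀ u : D j, ¬ R''' j u u) ∧
      (∀ u w z : D j, R''' j u w → R''' j w z → R''' j u z))
    (hagree : ∀ j, j ≠ i → R' j = R'' j ∧ R' j = R''' j)
    (hi' : R' i = implicitPref (fun a : Fin k => v a.castSucc))
    (hi'' : R'' i = implicitPref (fun _ : Fin 1 => v (Fin.last k)))
    (hi''' : R''' i = implicitPref v)
    (S : Set (∀ j, D j))
    (hS' : skyline 𝒟 R' ⊆ S) (hS'' : skyline 𝒟 R'' ⊆ S)
    (hS''' : skyline 𝒟 R''' ⊆ S) :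
    S \ skyline 𝒟 R''' =
      (S \ skyline 𝒟 R') ∪
        ((S \ skyline 𝒟 R'')
          \ {p ∈ S \ skyline 𝒟 R'' | ∃ a : Fin k, p i = v a.castSucc}) :=
  merging_property_disqualifying_general 𝒟 i k v R' R'' R''' hagree hi' hi'' hi''' S
end

section
/- Under the merging setup, if p ∈ SKY_𝒟(R̃') and p.D_i ∈ {v_1,…,v_{x-1}}, then p ∈ SKY_𝒟(R̃'''). -/
/-- if `p ∈ SKY(R')` and `p.D_i ∈ {v 0, …, v (k-1)}`
then `p ∈ SKY(R''')`. -/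
theorem merging_mem_third_of_psky {m : ℕ} (hm : 1 ≤ m) {D : Fin m → Type*}
    (𝒟 : Set (∀ j, D j)) (i : Fin m)
    (k : ℕ) (hk : 1 ≤ k) (v : Fin (k + 1) → D i) (hv : Function.Injective v)
    (R' R'' R''' : ∀ j, D j → D j → Prop)
    (hpo' : ∀ j, (∀ u : D j, ¬ R' j u u) ∧
      (∀ u w z : D j, R' j u w → R' j w z → R' j u z))
    (hpo'' : ∀ j, (∀ u : D j, ¬ R'' j u u) ∧
      (∀ u w z : D j, R'' j u w → R'' j w z → R'' j u z))
    (hpo''' : ∀ j, (∀ u : D j, ¬ R''' j u u) ∧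
      (∀ u w z : D j, R''' j u w → R''' j w z → R''' j u z))
    (hagree : ∀ j, j ≠ i → R' j = R'' j ∧ R' j = R''' j)
    (hi' : R' i = implicitPref (fun a : Fin k => v a.castSucc))
    (hi'' : R'' i = implicitPref (fun _ : Fin 1 => v (Fin.last k)))
    (hi''' : R''' i = implicitPref v)
    (p : ∀ j, D j) (hp : p ∈ skyline 𝒟 R')
    (hpi : ∃ a : Fin k, p i = v a.castSucc) :
    p ∈ skyline 𝒟 R''' := by
  obtain ⟨hpD, hpn⟩ := hp
  obtain ⟨a, hpa⟩ := hpi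
  refine ⟨hpD, fun q hq hdom => hpn q hq ?_⟩
  have key : ∀ j, R''' j (q j) (p j) → R' j (q j) (p j) := by
    intro j h
    rcases eq_or_ne j i with rfl | hji
    · rw [hi'''] at h
      rw [hi']
      obtain ⟨b, hqb, hb⟩ := h
      have hba : b < a.castSucc := by
        by_contra hle
        exact hb a.castSucc (le_of_not_gt hle) hpa
      have hbk : (b : ℕ) < k := lt_of_lt_of_le hba (by simpa using a.is_le)
      refine ⟨⟨b, hbk⟩, by simpa [Fin.castSucc, Fin.ext_iff] using hqb, ?_⟩
      intro c hc
      exact hb c.castSucc (by simp [Fin.le_def]; exact hc)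
    · rw [(hagree j hji).2]
      exact h
  obtain ⟨hall, jj, hjj⟩ := hdom
  exact ⟨fun j => (hall j).imp id (key j), jj, key jj hjj⟩
end

section
/- Under the merging setup, if p ∈ SKY_𝒟(R̃') and p ∈ SKY_𝒟(R̃''), then p ∈ SKY_𝒟(R̃'''). -/
/-! On dimension `i`, `v 0 ≺ … ≺ v k ≺ *` splits into the two coarser preferences:
`q.D_i ≺ p.D_i` with `q.D_i = v a` is witnessed by `R'` when `a < k` and by `R''` when `a = k`.
Hence a point dominating `p` for `R'''` dominates it for `R'` or for `R''`. -/

theorem implicitPref.castSucc_or_last {D : Type*} {k : ℕ} {v : Fin (k + 1) → D} {u w : D}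
    (h : implicitPref v u w) :
    implicitPref (fun a : Fin k => v a.castSucc) u w ∨
      implicitPref (fun _ : Fin 1 => v (Fin.last k)) u w := by
  obtain ⟨a, rfl, hw⟩ := h
  rcases Fin.eq_castSucc_or_eq_last a with ⟨a, rfl⟩ | rfl
  · exact .inl ⟨a, rfl, fun b hb => hw b.castSucc (Fin.castSucc_le_castSucc_iff.mpr hb)⟩
  · exact .inr ⟨0, rfl, fun _ _ => hw _ le_rfl⟩

section Dominance

variable {m : ℕ} {D : Fin m → Type*} {R S : ∀ j, D j → D j → Prop} {p q : ∀ j, D j}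

theorem dominates.of_imp (h : dominates R q p)
    (hRS : ∀ j, R j (q j) (p j) → S j (q j) (p j)) : dominates S q p :=
  ⟨fun j => (h.1 j).imp_right (hRS j), h.2.imp fun j => hRS j⟩

theorem imp_of_eq_of_ne {i : Fin m} (hRS : ∀ j, j ≠ i → R j = S j)
    (hi : R i (q i) (p i) → S i (q i) (p i)) (j : Fin m) :
    R j (q j) (p j) → S j (q j) (p j) := by
  by_cases hj : j = i
  · subst hj
    exact hi
  · rw [hRS j hj]
    exact id

theorem notMem_skyline_of_dominates {𝒟 : Set (∀ j, D j)} (hq : q ∈ 𝒟) (h : dominates R q p) :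
    p ∉ skyline 𝒟 R :=
  fun hp => hp.2 q hq h

end Dominance

theorem merging_mem_third_of_inter_general {m : ℕ} {D : Fin m → Type*}
    (𝒟 : Set (∀ j, D j)) (i : Fin m)
    (k : ℕ) (v : Fin (k + 1) → D i)
    (R' R'' R''' : ∀ j, D j → D j → Prop)
    (hagree : ∀ j, j ≠ i → R' j = R'' j ∧ R' j = R''' j)
    (hi' : R' i = implicitPref (fun a : Fin k => v a.castSucc))
    (hi'' : R'' i = implicitPref (fun _ : Fin 1 => v (Fin.last k)))
    (hi''' : R''' i = implicitPref v)
    (p : ∀ j, D j) (hp' : p ∈ skyline 𝒟 R') (hp'' : p ∈ skyline 𝒟 R'') :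
    p ∈ skyline 𝒟 R''' := by
  refine ⟨hp'.1, fun q hq hdom => ?_⟩
  have hsplit : R''' i (q i) (p i) → R' i (q i) (p i) ∨ R'' i (q i) (p i) := by
    rw [hi', hi'', hi''']
    exact implicitPref.castSucc_or_last
  rcases (by tauto : (R''' i (q i) (p i) → R' i (q i) (p i)) ∨
      (R''' i (q i) (p i) → R'' i (q i) (p i))) with h | h
  · refine notMem_skyline_of_dominates hq (hdom.of_imp ?_) hp'
    exact imp_of_eq_of_ne (fun j hj => (hagree j hj).2.symm) h
  · refine notMem_skyline_of_dominates hq (hdom.of_imp ?_) hp''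
    exact imp_of_eq_of_ne (fun j hj => ((hagree j hj).2.symm.trans (hagree j hj).1)) h

/-- if `p ∈ SKY(R')` and `p ∈ SKY(R'')` then `p ∈ SKY(R''')`. -/
theorem merging_mem_third_of_inter {m : ℕ} (hm : 1 ≤ m) {D : Fin m → Type*}
    (𝒟 : Set (∀ j, D j)) (i : Fin m)
    (k : ℕ) (hk : 1 ≤ k) (v : Fin (k + 1) → D i) (hv : Function.Injective v)
    (R' R'' R''' : ∀ j, D j → D j → Prop)
    (hpo' : ∀ j, (∀ u : D j, ¬ R' j u u) ∧
      (∀ u w z : D j, R' j u w → R' j w z → R' j u z))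
    (hpo'' : ∀ j, (∀ u : D j, ¬ R'' j u u) ∧
      (∀ u w z : D j, R'' j u w → R'' j w z → R'' j u z))
    (hpo''' : ∀ j, (∀ u : D j, ¬ R''' j u u) ∧
      (∀ u w z : D j, R''' j u w → R''' j w z → R''' j u z))
    (hagree : ∀ j, j ≠ i → R' j = R'' j ∧ R' j = R''' j)
    (hi' : R' i = implicitPref (fun a : Fin k => v a.castSucc))
    (hi'' : R'' i = implicitPref (fun _ : Fin 1 => v (Fin.last k)))
    (hi''' : R''' i = implicitPref v)
    (p : ∀ j, D j) (hp' : p ∈ skyline 𝒟 R') (hp'' : p ∈ skyline 𝒟 R'') :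
    p ∈ skyline 𝒟 R''' :=
  merging_mem_third_of_inter_general 𝒟 i k v R' R'' R''' hagree hi' hi'' hi''' p hp' hp''
end

section
/- (Correctness of sorted skyline scanning) Let f be a real-valued function on points such that for all p, q, if p dominates q with respect to R then f(p) < f(q). Then a point p ∈ 𝒟 belongs to the skyline SKY_𝒟(R) if and only if no point q ∈ 𝒟 with f(q) < f(p) dominates p with respect to R. -/
theorem sorted_scan_correct_general {m : ℕ} {D : Fin m → Type*}
    (𝒟 : Set (∀ i, D i))
    (R : ∀ i, D i → D i → Prop)
    (f : (∀ i, D i) → ℝ)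
    (hf : ∀ p q : ∀ i, D i, dominates R p q → f p < f q)
    (p : ∀ i, D i) (hp : p ∈ 𝒟) :
    p ∈ skyline 𝒟 R ↔ ∀ q ∈ 𝒟, f q < f p → ¬ dominates R q p :=
  ⟨fun h q hq _ => h.2 q hq, fun h => ⟨hp, fun q hq hd => h q hq (hf q p hd) hd⟩⟩

/-- Correctness of sorted skyline scanning: if dominance implies a strictly
smaller `f`-score, then `p ∈ 𝒟` is in the skyline iff no point of `𝒟` with smaller score
dominates it. -/
theorem sorted_scan_correct {m : ℕ} (hm : 1 ≤ m) {D : Fin m → Type*}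
    (𝒟 : Set (∀ i, D i))
    (R : ∀ i, D i → D i → Prop)
    (f : (∀ i, D i) → ℝ)
    (hf : ∀ p q : ∀ i, D i, dominates R p q → f p < f q)
    (p : ∀ i, D i) (hp : p ∈ 𝒟) :
    p ∈ skyline 𝒟 R ↔ ∀ q ∈ 𝒟, f q < f p → ¬ dominates R q p :=
  sorted_scan_correct_general 𝒟 R f hf p hp
end

section
/- (Adaptive SFS reduction) Let 𝒟 be a finite dataset, let R be a preference and R' a refinement of R, where every component relation of R' is a strict partial order (irreflexive and transitive). Then SKY_𝒟(R') = {p ∈ SKY_𝒟(R) : no q ∈ SKY_𝒟(R) dominates p with respect to R'}; that is, the skyline of 𝒟 with respect to R' equals the skyline of the set SKY_𝒟(R) with respect to R'. -/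
/-!
Domination with respect to a preference whose components are strict partial orders is itself a
strict partial order on points, and it grows when the preference is refined. On a finite dataset,
a point dominated with respect to `R'` is therefore dominated by an `R'`-minimal dominator, which
lies in `SKY(R')` and hence in `SKY(R)`; so comparing against `SKY(R)` alone already detects every
`R'`-dominated point.
-/

section Dominates

variable {m : ℕ} {D : Fin m → Type*} {R R' : ∀ i, D i → D i → Prop}

theorem dominates.mono_s16 (href : ∀ i u w, R i u w → R' i u w) {p q : ∀ i, D i}
    (h : dominates R p q) : dominates R' p q :=
  ⟨fun i => (h.1 i).imp id (href i _ _), h.2.imp fun i => href i _ _⟩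

theorem dominates_irrefl (hirr : ∀ i u, ¬ R i u u) (p : ∀ i, D i) : ¬ dominates R p p :=
  fun ⟨_, i, hi⟩ => hirr i _ hi

theorem dominates.trans (htrans : ∀ i u w z, R i u w → R i w z → R i u z)
    {p q r : ∀ i, D i} (hpq : dominates R p q) (hqr : dominates R q r) : dominates R p r := by
  refine ⟨fun i => ?_, ?_⟩
  · rcases hpq.1 i with h₁ | h₁ <;> rcases hqr.1 i with h₂ | h₂
    · exact .inl (h₁.trans h₂)
    · exact .inr (h₁ ▸ h₂)
    · exact .inr (h₂ ▸ h₁)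
    · exact .inr (htrans i _ _ _ h₁ h₂)
  · obtain ⟨i, hi⟩ := hqr.2
    rcases hpq.1 i with h | h
    · exact ⟨i, h ▸ hi⟩
    · exact ⟨i, htrans i _ _ _ h hi⟩

end Dominates

section Skyline

variable {m : ℕ} {D : Fin m → Type*} {𝒟 : Set (∀ i, D i)} {R R' : ∀ i, D i → D i → Prop}

theorem skyline_subset : skyline 𝒟 R ⊆ 𝒟 := fun _ hp => hp.1

theorem skyline_subset_skyline_of_refines (href : ∀ i u w, R i u w → R' i u w) :
    skyline 𝒟 R' ⊆ skyline 𝒟 R :=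
  fun _ ⟨hp, hndom⟩ => ⟨hp, fun q hq hqp => hndom q hq (hqp.mono_s16 href)⟩

theorem exists_mem_skyline_dominates (hfin : 𝒟.Finite) (hirr : ∀ i u, ¬ R i u u)
    (htrans : ∀ i u w z, R i u w → R i w z → R i u z) {p q : ∀ i, D i} (hq : q ∈ 𝒟)
    (hqp : dominates R q p) : ∃ a ∈ skyline 𝒟 R, dominates R a p := by
  have : IsStrictOrder (∀ i, D i) (dominates R) :=
    { irrefl := dominates_irrefl hirr, trans := fun _ _ _ => dominates.trans htrans }
  let S := {r ∈ 𝒟 | dominates R r p}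
  have hS : S.WellFoundedOn (dominates R) := (hfin.subset fun _ hr => hr.1).wellFoundedOn
  obtain ⟨⟨a, haD, hap⟩, -, hmin⟩ := hS.has_min Set.univ ⟨⟨q, hq, hqp⟩, trivial⟩
  exact ⟨a, ⟨haD, fun r hr hra => hmin ⟨r, hr, hra.trans htrans hap⟩ trivial hra⟩, hap⟩

end Skyline

theorem adaptive_sfs_reduction_general {m : ℕ} {D : Fin m → Type*}
    (𝒟 : Set (∀ i, D i)) (hfin : 𝒟.Finite)
    (R R' : ∀ i, D i → D i → Prop)
    (href : ∀ i, ∀ u w : D i, R i u w → R' i u w)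
    (hirr' : ∀ i, ∀ u : D i, ¬ R' i u u)
    (htrans' : ∀ i, ∀ u w z : D i, R' i u w → R' i w z → R' i u z) :
    skyline 𝒟 R' = skyline (skyline 𝒟 R) R' := by
  ext p
  refine ⟨fun hp => ⟨skyline_subset_skyline_of_refines href hp, fun q hq => hp.2 q hq.1⟩, ?_⟩
  rintro ⟨hp, hndom⟩
  refine ⟨skyline_subset hp, fun q hq hqp => ?_⟩
  obtain ⟨a, ha, hap⟩ := exists_mem_skyline_dominates hfin hirr' htrans' hq hqp
  exact hndom a (skyline_subset_skyline_of_refines href ha) hap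

/-- Adaptive SFS reduction: for a finite dataset `𝒟`, a refinement `R'`
of `R` with strict-partial-order components, the skyline of `𝒟` w.r.t. `R'` equals the
skyline of the set `SKY_𝒟(R)` w.r.t. `R'`. -/
theorem adaptive_sfs_reduction {m : ℕ} (hm : 1 ≤ m) {D : Fin m → Type*}
    (𝒟 : Set (∀ i, D i)) (hfin : 𝒟.Finite)
    (R R' : ∀ i, D i → D i → Prop)
    (href : ∀ i, ∀ u w : D i, R i u w → R' i u w)
    (hirr' : ∀ i, ∀ u : D i, ¬ R' i u u)
    (htrans' : ∀ i, ∀ u w z : D i, R' i u w → R' i w z → R' i u z) :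
    skyline 𝒟 R' = skyline (skyline 𝒟 R) R' :=
  adaptive_sfs_reduction_general 𝒟 hfin R R' href hirr' htrans'
end
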